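/- arXiv:2603.01888 — 6 statements merged into one kernel-verified Lean document; each statement's English description precedes it below -/
import Mathlib

section
/- In the per-FoV binary model, suppose (p3D, p2D, r) satisfies the memory constraint with slack at least α (i.e., Σ_i (p2D_i + α·p3D_i) ≤ δ − α) and the rendering constraint, and suppose there exists a FoV j served by remote 3D transmission, i.e., p3D_j = 0 and r_j = 0. Then the modified decision obtained by setting p3D_j := 1 (all other components unchanged) satisfies both constraints and strictly decreases the total delay Σ_i T_i, namely the total delay decreases by exactly α·Q2D/R > 0. Consequently, no memory-slack solution that leaves a FoV on the remote 3D transmission path can be optimal, so the memory constraint is tight at the optimum. -/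
open Finset

theorem Fintype.sum_eq_sum_add_sub_of_eq_of_ne {ι M : Type*} [Fintype ι] [AddCommGroup M]
    {F G : ι → M} (j : ι) (h : ∀ i, i ≠ j → F i = G i) :
    ∑ i, F i = ∑ i, G i + (F j - G j) := by
  rw [← sub_eq_iff_eq_add', ← sum_sub_distrib]
  exact Fintype.sum_eq_single j fun i hi => sub_eq_zero.mpr (h i hi)

section PerFoV

variable {ι : Type*}

theorem update_one_mem_zero_one [DecidableEq ι] {p : ι → ℝ}
    (hp : ∀ i, p i = 0 ∨ p i = 1) (j : ι) :
    ∀ i, Function.update p j 1 i = 0 ∨ Function.update p j 1 i = 1 := by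
  intro i
  rcases eq_or_ne i j with rfl | hij
  · simp
  · simpa [Function.update_of_ne hij] using hp i

theorem sum_memory_update_one [Fintype ι] [DecidableEq ι] (α : ℝ) (p2 p3 : ι → ℝ) {j : ι}
    (hj : p3 j = 0) :
    ∑ i, (p2 i + α * Function.update p3 j 1 i) = ∑ i, (p2 i + α * p3 i) + α := by
  rw [Fintype.sum_eq_sum_add_sub_of_eq_of_ne j fun i hij => by
    rw [Function.update_of_ne hij]]
  simp [hj]

/-- The per-FoV delay `T_i`. -/
noncomputable def fovDelay (Q2D R f o α : ℝ) (p3 p2 r : ι → ℝ) (i : ι) : ℝ :=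
  (1 - p3 i) * (r i * (Q2D * o / f + (1 - p2 i) * (Q2D / R)) + (1 - r i) * (α * Q2D / R))

variable (Q2D R f o α : ℝ) (p3 p2 r : ι → ℝ)

theorem fovDelay_update_one_self [DecidableEq ι] (j : ι) :
    fovDelay Q2D R f o α (Function.update p3 j 1) p2 r j = 0 := by
  simp [fovDelay]

theorem fovDelay_of_remote {j : ι} (h3 : p3 j = 0) (hr : r j = 0) :
    fovDelay Q2D R f o α p3 p2 r j = α * Q2D / R := by
  simp [fovDelay, h3, hr]

theorem sum_fovDelay_update_one [Fintype ι] [DecidableEq ι] (j : ι) :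
    ∑ i, fovDelay Q2D R f o α (Function.update p3 j 1) p2 r i
      = ∑ i, fovDelay Q2D R f o α p3 p2 r i - fovDelay Q2D R f o α p3 p2 r j := by
  rw [Fintype.sum_eq_sum_add_sub_of_eq_of_ne (G := fovDelay Q2D R f o α p3 p2 r) j
    fun i hij => by rw [fovDelay, fovDelay, Function.update_of_ne hij], fovDelay_update_one_self]
  ring

end PerFoV

theorem stmt2_general (V : ℕ) (Q2D R f o α δ Qmax : ℝ)
    (hQ : 0 < Q2D) (hR : 0 < R) (hα : 1 < α)
    (p3D p2D r : Fin V → ℝ)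
    (hb3 : ∀ i, p3D i = 0 ∨ p3D i = 1)
    (hb2 : ∀ i, p2D i = 0 ∨ p2D i = 1)
    (hbr : ∀ i, r i = 0 ∨ r i = 1)
    (hmem : ∑ i, (p2D i + α * p3D i) ≤ δ - α)
    (hren : ∑ i, r i ≤ Qmax)
    (j : Fin V) (hj3 : p3D j = 0) (hjr : r j = 0)
    (T : (Fin V → ℝ) → (Fin V → ℝ) → (Fin V → ℝ) → Fin V → ℝ)
    (hT : ∀ p3 p2 rr i, T p3 p2 rr i =
      (1 - p3 i) * (rr i * (Q2D * o / f + (1 - p2 i) * (Q2D / R))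
        + (1 - rr i) * (α * Q2D / R))) :
    (∑ i, (p2D i + α * Function.update p3D j 1 i) ≤ δ) ∧
    (∑ i, r i ≤ Qmax) ∧
    (∑ i, T (Function.update p3D j 1) p2D r i
      = ∑ i, T p3D p2D r i - α * Q2D / R) ∧
    (0 < α * Q2D / R) ∧
    (∑ i, T (Function.update p3D j 1) p2D r i < ∑ i, T p3D p2D r i) ∧
    (∃ q3 q2 s : Fin V → ℝ,
      (∀ i, q3 i = 0 ∨ q3 i = 1) ∧ (∀ i, q2 i = 0 ∨ q2 i = 1) ∧
      (∀ i, s i = 0 ∨ s i = 1) ∧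
      (∑ i, (q2 i + α * q3 i) ≤ δ) ∧ (∑ i, s i ≤ Qmax) ∧
      ∑ i, T q3 q2 s i < ∑ i, T p3D p2D r i) := by
  obtain rfl : T = fovDelay Q2D R f o α := by
    funext p3 p2 rr i
    exact hT p3 p2 rr i
  have hgain : 0 < α * Q2D / R := by
    have : 0 < α := one_pos.trans hα
    positivity
  have hmem' : ∑ i, (p2D i + α * Function.update p3D j 1 i) ≤ δ := by
    rw [sum_memory_update_one α p2D p3D hj3]
    linarith
  have hdelay := sum_fovDelay_update_one Q2D R f o α p3D p2D r j
  rw [fovDelay_of_remote Q2D R f o α p3D p2D r hj3 hjr] at hdelay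
  have hlt : ∑ i, fovDelay Q2D R f o α (Function.update p3D j 1) p2D r i
      < ∑ i, fovDelay Q2D R f o α p3D p2D r i := by
    linarith
  exact ⟨hmem', hren, hdelay, hgain, hlt,
    _, _, _, update_one_mem_zero_one hb3 j, hb2, hbr, hmem', hren, hlt⟩

/-- Per-FoV binary model: with memory slack at least `α`, upgrading a FoV `j`
served by remote 3D transmission (`p3D j = 0`, `r j = 0`) to on-device 3D
prefetching (`p3D j := 1`) keeps both constraints and strictly decreases the
total delay by exactly `α·Q2D/R > 0`; hence the original decision is not
optimal (the memory constraint must be tight at the optimum). -/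
theorem stmt2 (V : ℕ) (Q2D R f o α δ Qmax : ℝ)
    (hQ : 0 < Q2D) (hR : 0 < R) (hf : 0 < f) (ho : 0 < o) (hα : 1 < α)
    (hδ : 0 ≤ δ) (hQmax : 0 ≤ Qmax)
    (p3D p2D r : Fin V → ℝ)
    (hb3 : ∀ i, p3D i = 0 ∨ p3D i = 1)
    (hb2 : ∀ i, p2D i = 0 ∨ p2D i = 1)
    (hbr : ∀ i, r i = 0 ∨ r i = 1)
    (hmem : ∑ i, (p2D i + α * p3D i) ≤ δ - α)
    (hren : ∑ i, r i ≤ Qmax)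
    (j : Fin V) (hj3 : p3D j = 0) (hjr : r j = 0)
    (T : (Fin V → ℝ) → (Fin V → ℝ) → (Fin V → ℝ) → Fin V → ℝ)
    (hT : ∀ p3 p2 rr i, T p3 p2 rr i =
      (1 - p3 i) * (rr i * (Q2D * o / f + (1 - p2 i) * (Q2D / R))
        + (1 - rr i) * (α * Q2D / R))) :
    (∑ i, (p2D i + α * Function.update p3D j 1 i) ≤ δ) ∧
    (∑ i, r i ≤ Qmax) ∧
    (∑ i, T (Function.update p3D j 1) p2D r i
      = ∑ i, T p3D p2D r i - α * Q2D / R) ∧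
    (0 < α * Q2D / R) ∧
    (∑ i, T (Function.update p3D j 1) p2D r i < ∑ i, T p3D p2D r i) ∧
    (∃ q3 q2 s : Fin V → ℝ,
      (∀ i, q3 i = 0 ∨ q3 i = 1) ∧ (∀ i, q2 i = 0 ∨ q2 i = 1) ∧
      (∀ i, s i = 0 ∨ s i = 1) ∧
      (∑ i, (q2 i + α * q3 i) ≤ δ) ∧ (∑ i, s i ≤ Qmax) ∧
      ∑ i, T q3 q2 s i < ∑ i, T p3D p2D r i) :=
  stmt2_general V Q2D R f o α δ Qmax hQ hR hα p3D p2D r hb3 hb2 hbr hmem hren j hj3 hjr T hT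
end

section
/- In the homogeneous aggregated VR model, assume T3 ≥ T4 (the remote-3D-transmission priority zone). Then for any feasible (p, r) with p ≤ r, reducing the rendering variable to the prefetching level does not increase the average delay: T̄(p, p) ≤ T̄(p, r). -/
/-- Homogeneous aggregated VR model, remote-3D-transmission priority zone
(`T3 ≥ T4`): for feasible `(p, r)` with `p ≤ r`, reducing the rendering
variable to the prefetching level does not increase the average delay. -/
theorem stmt3 (Q2D R f o α V δ Qmax T2 T3 T4 : ℝ)
    (hQ : 0 < Q2D) (hR : 0 < R) (hf : 0 < f) (ho : 0 < o) (hα : 1 < α)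
    (hV : 0 < V) (hδ : 0 ≤ δ) (hQmax : 0 ≤ Qmax)
    (hbudget : δ / α + Qmax ≤ V)
    (hT2 : T2 = Q2D * o / f)
    (hT3 : T3 = Q2D / R + Q2D * o / f)
    (hT4 : T4 = α * Q2D / R)
    (Tbar : ℝ → ℝ → ℝ)
    (hTbar : ∀ p r, Tbar p r =
      (1 / V) * (min p r * T2 + (r - min p r) * T3
        + (V - (δ - p) / α - r) * T4))
    (hzone : T3 ≥ T4) :
    ∀ p r : ℝ, 0 ≤ p → p ≤ δ → 0 ≤ r → r ≤ Qmax → p ≤ r →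
      Tbar p p ≤ Tbar p r := by
  intro p r hp hpδ hr hrQ hpr
  rw [hTbar, hTbar, min_self, min_eq_left hpr]
  have hVinv : 0 < 1 / V := by positivity
  nlinarith [mul_nonneg (sub_nonneg.2 hpr) (sub_nonneg.2 hzone), hVinv.le]
end

section
/- In the homogeneous aggregated VR model, assume T2 < T4·(1 − 1/α), i.e., on-device rendering with 2D prefetched provides more delay reduction than allocating the corresponding memory to 3D prefetching. Then the diagonal average delay p ↦ T̄(p, p) is strictly decreasing on [0, δ]: if 0 ≤ p1 < p2 ≤ δ, then T̄(p2, p2) < T̄(p1, p1). -/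
/-! On the diagonal `r = p` the delay is affine in `p`: each unit moved into the 2D budget
costs `T2` but frees `1 - 1/α` units of 3D prefetching worth `T4` each, so its slope is
`(T2 - T4 (1 - 1/α)) / V`, negative exactly under the assumption on `T2`. -/

noncomputable def avgDelay (V δ α T2 T3 T4 p r : ℝ) : ℝ :=
  (1 / V) * (min p r * T2 + (r - min p r) * T3 + (V - (δ - p) / α - r) * T4)

lemma avgDelay_diag_sub_diag (V δ α T2 T3 T4 p₁ p₂ : ℝ) :
    avgDelay V δ α T2 T3 T4 p₂ p₂ - avgDelay V δ α T2 T3 T4 p₁ p₁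
      = (p₂ - p₁) * (T2 - T4 * (1 - 1 / α)) / V := by
  simp only [avgDelay, min_self, sub_self, zero_mul, add_zero]
  ring

lemma avgDelay_diag_strictAnti {V δ α T2 T3 T4 : ℝ} (hV : 0 < V)
    (hslope : T2 < T4 * (1 - 1 / α)) :
    StrictAnti fun p => avgDelay V δ α T2 T3 T4 p p := by
  intro p₁ p₂ h
  have hdiff := avgDelay_diag_sub_diag V δ α T2 T3 T4 p₁ p₂
  have hneg : (p₂ - p₁) * (T2 - T4 * (1 - 1 / α)) / V < 0 :=
    div_neg_of_neg_of_pos (mul_neg_of_pos_of_neg (sub_pos.2 h) (sub_neg.2 hslope)) hV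
  simp only
  linarith

theorem stmt6_general (α V δ T2 T3 T4 : ℝ)
    (hV : 0 < V)
    (Tbar : ℝ → ℝ → ℝ)
    (hTbar : ∀ p r, Tbar p r =
      (1 / V) * (min p r * T2 + (r - min p r) * T3
        + (V - (δ - p) / α - r) * T4))
    (hzone : T2 < T4 * (1 - 1 / α)) :
    ∀ p1 p2 : ℝ, 0 ≤ p1 → p1 < p2 → p2 ≤ δ →
      Tbar p2 p2 < Tbar p1 p1 := by
  intro p1 p2 _ h12 _
  rw [hTbar, hTbar]
  exact avgDelay_diag_strictAnti hV hzone h12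

/-- Homogeneous aggregated VR model, assuming `T2 < T4·(1 − 1/α)`: the
diagonal average delay `p ↦ T̄(p,p)` is strictly decreasing on `[0, δ]`. -/
theorem stmt6 (Q2D R f o α V δ Qmax T2 T3 T4 : ℝ)
    (hQ : 0 < Q2D) (hR : 0 < R) (hf : 0 < f) (ho : 0 < o) (hα : 1 < α)
    (hV : 0 < V) (hδ : 0 ≤ δ) (hQmax : 0 ≤ Qmax)
    (hbudget : δ / α + Qmax ≤ V)
    (hT2 : T2 = Q2D * o / f)
    (hT3 : T3 = Q2D / R + Q2D * o / f)
    (hT4 : T4 = α * Q2D / R)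
    (Tbar : ℝ → ℝ → ℝ)
    (hTbar : ∀ p r, Tbar p r =
      (1 / V) * (min p r * T2 + (r - min p r) * T3
        + (V - (δ - p) / α - r) * T4))
    (hzone : T2 < T4 * (1 - 1 / α)) :
    ∀ p1 p2 : ℝ, 0 ≤ p1 → p1 < p2 → p2 ≤ δ →
      Tbar p2 p2 < Tbar p1 p1 :=
  stmt6_general α V δ T2 T3 T4 hV Tbar hTbar hzone
end

section
/- (Optimal strategy in the on-device rendering priority zone.) In the homogeneous aggregated VR model, assume T3 < T4 and δ/α + Qmax ≤ V. Let p* = min(δ, Qmax) and r* = Qmax. Then (p*, r*) is a global minimizer of T̄ over the feasible set {(p, r) : 0 ≤ p ≤ δ, 0 ≤ r ≤ Qmax}, i.e., T̄(p*, r*) ≤ T̄(p, r) for every feasible (p, r), and the minimum value equals T̄(p*, r*) = T4 − (T4/V)·(δ/α) + (p*/V)·(T2 − T4 + T4/α) + ((Qmax − p*)/V)·(T3 − T4). -/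
/-- Optimal strategy in the on-device rendering priority zone: under
`T3 < T4` and `δ/α + Qmax ≤ V`, the point `p* = min(δ, Qmax)`, `r* = Qmax`
globally minimizes `T̄` over the feasible set, with minimum value
`T4 − (T4/V)·(δ/α) + (p*/V)·(T2 − T4 + T4/α) + ((Qmax − p*)/V)·(T3 − T4)`. -/
theorem stmt9 (Q2D R f o α V δ Qmax T2 T3 T4 : ℝ)
    (hQ : 0 < Q2D) (hR : 0 < R) (hf : 0 < f) (ho : 0 < o) (hα : 1 < α)
    (hV : 0 < V) (hδ : 0 ≤ δ) (hQmax : 0 ≤ Qmax)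
    (hbudget : δ / α + Qmax ≤ V)
    (hT2 : T2 = Q2D * o / f)
    (hT3 : T3 = Q2D / R + Q2D * o / f)
    (hT4 : T4 = α * Q2D / R)
    (Tbar : ℝ → ℝ → ℝ)
    (hTbar : ∀ p r, Tbar p r =
      (1 / V) * (min p r * T2 + (r - min p r) * T3
        + (V - (δ - p) / α - r) * T4))
    (hzone : T3 < T4) :
    (∀ p r : ℝ, 0 ≤ p → p ≤ δ → 0 ≤ r → r ≤ Qmax →
      Tbar (min δ Qmax) Qmax ≤ Tbar p r) ∧
    Tbar (min δ Qmax) Qmax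
      = T4 - (T4 / V) * (δ / α) + (min δ Qmax / V) * (T2 - T4 + T4 / α)
        + ((Qmax - min δ Qmax) / V) * (T3 - T4) := by
  have hα0 : (0:ℝ) < α := lt_trans one_pos hα
  have hαne : α ≠ 0 := ne_of_gt hα0
  have hVne : V ≠ 0 := ne_of_gt hV
  have hmin : min (min δ Qmax) Qmax = min δ Qmax := by
    rw [min_assoc, min_self]
  constructor
  · intro p r hp0 hpδ hr0 hrQ
    rw [hTbar, hTbar, hmin]
    set q := min p r with hqdef
    have hq1 : q ≤ p := min_le_left _ _
    have hq2 : q ≤ r := min_le_right _ _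
    have hid : (q * T2 + (r - q) * T3 + (V - (δ - p) / α - r) * T4)
        - (min δ Qmax * T2 + (Qmax - min δ Qmax) * T3
          + (V - (δ - min δ Qmax) / α - Qmax) * T4)
        = (p - q) * (Q2D / R) + (Qmax - r) * (T4 - T3) := by
      subst hT2 hT3 hT4
      field_simp
      ring
    have h1 : 0 ≤ (p - q) * (Q2D / R) :=
      mul_nonneg (by linarith) (le_of_lt (div_pos hQ hR))
    have h2 : 0 ≤ (Qmax - r) * (T4 - T3) :=
      mul_nonneg (by linarith) (by linarith)
    have hkey : (min δ Qmax * T2 + (Qmax - min δ Qmax) * T3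
          + (V - (δ - min δ Qmax) / α - Qmax) * T4)
        ≤ (q * T2 + (r - q) * T3 + (V - (δ - p) / α - r) * T4) := by
      linarith
    exact mul_le_mul_of_nonneg_left hkey (by positivity)
  · rw [hTbar, hmin]
    field_simp
    ring
end

section
/- In the homogeneous aggregated VR model, assume T3 < T4. Then for any fixed p with 0 ≤ p ≤ δ, the map r ↦ T̄(p, r) is strictly decreasing on the full range 0 ≤ r ≤ Qmax: if 0 ≤ r1 < r2 ≤ Qmax, then T̄(p, r2) < T̄(p, r1). (Note T2 < T3 holds automatically since Q2D/R > 0, so both path-2 segments and path-3 segments of the piecewise-linear map are strictly decreasing.) -/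
/-- Homogeneous aggregated VR model, assuming `T3 < T4`: for any fixed `p`
with `0 ≤ p ≤ δ`, the map `r ↦ T̄(p, r)` is strictly decreasing on the full
range `0 ≤ r ≤ Qmax`. -/
theorem stmt10 (Q2D R f o α V δ Qmax T2 T3 T4 : ℝ)
    (hQ : 0 < Q2D) (hR : 0 < R) (hf : 0 < f) (ho : 0 < o) (hα : 1 < α)
    (hV : 0 < V) (hδ : 0 ≤ δ) (hQmax : 0 ≤ Qmax)
    (hbudget : δ / α + Qmax ≤ V)
    (hT2 : T2 = Q2D * o / f)
    (hT3 : T3 = Q2D / R + Q2D * o / f)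
    (hT4 : T4 = α * Q2D / R)
    (Tbar : ℝ → ℝ → ℝ)
    (hTbar : ∀ p r, Tbar p r =
      (1 / V) * (min p r * T2 + (r - min p r) * T3
        + (V - (δ - p) / α - r) * T4))
    (hzone : T3 < T4)
    (p : ℝ) (hp0 : 0 ≤ p) (hpδ : p ≤ δ) :
    ∀ r1 r2 : ℝ, 0 ≤ r1 → r1 < r2 → r2 ≤ Qmax →
      Tbar p r2 < Tbar p r1 := by
  intro r1 r2 hr1 hlt hr2
  rw [hTbar, hTbar]
  have hT23 : T2 < T3 := by
    rw [hT2, hT3]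
    have : 0 < Q2D / R := div_pos hQ hR
    linarith
  have hmin : min p r1 ≤ min p r2 := min_le_min le_rfl hlt.le
  have hVpos : 0 < 1 / V := by positivity
  apply mul_lt_mul_of_pos_left _ hVpos
  nlinarith [mul_nonneg (sub_nonneg.2 hmin) (sub_nonneg.2 hT23.le),
    mul_pos (sub_pos.2 hlt) (sub_pos.2 hzone)]
end

section
/- In the homogeneous aggregated VR model, the average delay at full rendering budget r = Qmax is constant in the prefetching variable on the range p ≤ Qmax: for all p1, p2 with 0 ≤ p1 ≤ p2 ≤ min(δ, Qmax), T̄(p1, Qmax) = T̄(p2, Qmax). (This holds because T2 − T3 + T4/α = −Q2D/R + Q2D/R = 0, so converting a path-3 FoV to path 2 while releasing α⁻¹ units of 3D memory exactly cancels.) -/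
/-- Homogeneous aggregated VR model: at full rendering budget `r = Qmax`, the
average delay is constant in the prefetching variable on `p ≤ Qmax`. -/
theorem stmt11 (Q2D R f o α V δ Qmax T2 T3 T4 : ℝ)
    (hQ : 0 < Q2D) (hR : 0 < R) (hf : 0 < f) (ho : 0 < o) (hα : 1 < α)
    (hV : 0 < V) (hδ : 0 ≤ δ) (hQmax : 0 ≤ Qmax)
    (hbudget : δ / α + Qmax ≤ V)
    (hT2 : T2 = Q2D * o / f)
    (hT3 : T3 = Q2D / R + Q2D * o / f)
    (hT4 : T4 = α * Q2D / R)
    (Tbar : ℝ → ℝ → ℝ)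
    (hTbar : ∀ p r, Tbar p r =
      (1 / V) * (min p r * T2 + (r - min p r) * T3
        + (V - (δ - p) / α - r) * T4)) :
    ∀ p1 p2 : ℝ, 0 ≤ p1 → p1 ≤ p2 → p2 ≤ min δ Qmax →
      Tbar p1 Qmax = Tbar p2 Qmax := by
  intro p1 p2 h0 h12 h2
  have h2Q : p2 ≤ Qmax := le_trans h2 (min_le_right _ _)
  have h1Q : p1 ≤ Qmax := le_trans h12 h2Q
  have hα0 : (0:ℝ) < α := lt_trans one_pos hα
  rw [hTbar, hTbar, min_eq_left h1Q, min_eq_left h2Q, hT2, hT3, hT4]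
  field_simp
  ring
end
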